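/- Let b = (b11,b12,b13,b22,b23,b33,b44,b55,b66) ∈ ℝ⁹ be an arbitrary orthorhombic parameter tuple. Define the three anomalous companions of b by replacing the triple (b12, b13, b23) respectively with (b12, −2b55−b13, −2b44−b23), with (−2b66−b12, −2b55−b13, b23), and with (−2b66−b12, b13, −2b44−b23), keeping the remaining six parameters unchanged. Then all four tuples (b and its three anomalous companions) have the same homogenized slowness polynomial: det(Γ_{b'} − p₀²·I₃) = det(Γ_b − p₀²·I₃) in ℝ[p₀,p₁,p₂,p₃] for each companion b'. -/
import Mathlib


open MvPolynomial Matrix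

/-- The Christoffel matrix of an orthorhombic 3D stiffness tensor with Voigt parameters
`b = (b11,b12,b13,b22,b23,b33,b44,b55,b66)` (indexed `0,…,8`), with polynomial entries in
`ℝ[p₀,p₁,p₂,p₃]` (where `pᵢ = X i`). -/
noncomputable def christoffelOrthoR (b : Fin 9 → ℝ) :
    Matrix (Fin 3) (Fin 3) (MvPolynomial (Fin 4) ℝ) :=
  !![C (b 0) * X 1 ^ 2 + C (b 8) * X 2 ^ 2 + C (b 7) * X 3 ^ 2,
     C (b 1 + b 8) * X 1 * X 2,
     C (b 2 + b 7) * X 1 * X 3;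
     C (b 1 + b 8) * X 1 * X 2,
     C (b 8) * X 1 ^ 2 + C (b 3) * X 2 ^ 2 + C (b 6) * X 3 ^ 2,
     C (b 4 + b 6) * X 2 * X 3;
     C (b 2 + b 7) * X 1 * X 3,
     C (b 4 + b 6) * X 2 * X 3,
     C (b 7) * X 1 ^ 2 + C (b 6) * X 2 ^ 2 + C (b 5) * X 3 ^ 2]

/-- The homogenized slowness polynomial `det(Γ_b − p₀²·I₃) ∈ ℝ[p₀,p₁,p₂,p₃]`. -/
noncomputable def slownessHomOrthoR (b : Fin 9 → ℝ) : MvPolynomial (Fin 4) ℝ :=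
  (christoffelOrthoR b - (X 0 ^ 2 : MvPolynomial (Fin 4) ℝ) • 1).det

/-- First anomalous companion: `(b12, b13, b23) ↦ (b12, −2b55−b13, −2b44−b23)`. -/
def orthoCompanion1 (b : Fin 9 → ℝ) : Fin 9 → ℝ :=
  ![b 0, b 1, -2 * b 7 - b 2, b 3, -2 * b 6 - b 4, b 5, b 6, b 7, b 8]

/-- Second anomalous companion: `(b12, b13, b23) ↦ (−2b66−b12, −2b55−b13, b23)`. -/
def orthoCompanion2 (b : Fin 9 → ℝ) : Fin 9 → ℝ :=
  ![b 0, -2 * b 8 - b 1, -2 * b 7 - b 2, b 3, b 4, b 5, b 6, b 7, b 8]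

/-- Third anomalous companion: `(b12, b13, b23) ↦ (−2b66−b12, b13, −2b44−b23)`. -/
def orthoCompanion3 (b : Fin 9 → ℝ) : Fin 9 → ℝ :=
  ![b 0, -2 * b 8 - b 1, b 2, b 3, -2 * b 6 - b 4, b 5, b 6, b 7, b 8]

set_option maxHeartbeats 2000000 in
lemma slowness_eq (b : Fin 9 → ℝ) :
    slownessHomOrthoR b =
      (C (b 0) * X 1 ^ 2 + C (b 8) * X 2 ^ 2 + C (b 7) * X 3 ^ 2 - X 0 ^ 2) *
        ((C (b 8) * X 1 ^ 2 + C (b 3) * X 2 ^ 2 + C (b 6) * X 3 ^ 2 - X 0 ^ 2) *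
          (C (b 7) * X 1 ^ 2 + C (b 6) * X 2 ^ 2 + C (b 5) * X 3 ^ 2 - X 0 ^ 2)
          - (C (b 4 + b 6) * X 2 * X 3) ^ 2)
      - (C (b 1 + b 8) * X 1 * X 2) *
        ((C (b 1 + b 8) * X 1 * X 2) *
          (C (b 7) * X 1 ^ 2 + C (b 6) * X 2 ^ 2 + C (b 5) * X 3 ^ 2 - X 0 ^ 2)
          - (C (b 4 + b 6) * X 2 * X 3) * (C (b 2 + b 7) * X 1 * X 3))
      + (C (b 2 + b 7) * X 1 * X 3) *
        ((C (b 1 + b 8) * X 1 * X 2) * (C (b 4 + b 6) * X 2 * X 3)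
          - (C (b 8) * X 1 ^ 2 + C (b 3) * X 2 ^ 2 + C (b 6) * X 3 ^ 2 - X 0 ^ 2)
            * (C (b 2 + b 7) * X 1 * X 3)) := by
  simp only [slownessHomOrthoR, christoffelOrthoR, Matrix.det_fin_three, Matrix.one_fin_three,
    Matrix.sub_apply, Matrix.smul_apply, Matrix.cons_val', Matrix.cons_val_zero,
    Matrix.cons_val_one, Matrix.head_cons, Matrix.empty_val', Matrix.cons_val_fin_one,
    Matrix.head_fin_const, Matrix.cons_val_two, Matrix.tail_cons, Matrix.of_apply,
    smul_eq_mul, mul_one, mul_zero]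
  ring

/-- An orthorhombic parameter tuple and its three anomalous companions all
have the same homogenized slowness polynomial. -/
theorem orthoCompanions_same_slowness (b : Fin 9 → ℝ) :
    slownessHomOrthoR (orthoCompanion1 b) = slownessHomOrthoR b ∧
    slownessHomOrthoR (orthoCompanion2 b) = slownessHomOrthoR b ∧
    slownessHomOrthoR (orthoCompanion3 b) = slownessHomOrthoR b := by
  refine ⟨?_, ?_, ?_⟩
  · rw [slowness_eq, slowness_eq]
    simp only [show orthoCompanion1 b 0 = b 0 from rfl, show orthoCompanion1 b 1 = b 1 from rfl, show orthoCompanion1 b 2 = -2 * b 7 - b 2 from rfl, show orthoCompanion1 b 3 = b 3 from rfl, show orthoCompanion1 b 4 = -2 * b 6 - b 4 from rfl, show orthoCompanion1 b 5 = b 5 from rfl, show orthoCompanion1 b 6 = b 6 from rfl, show orthoCompanion1 b 7 = b 7 from rfl, show orthoCompanion1 b 8 = b 8 from rfl, C_add, C_sub, C_mul, C_neg, map_ofNat]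
    ring
  · rw [slowness_eq, slowness_eq]
    simp only [show orthoCompanion2 b 0 = b 0 from rfl, show orthoCompanion2 b 1 = -2 * b 8 - b 1 from rfl, show orthoCompanion2 b 2 = -2 * b 7 - b 2 from rfl, show orthoCompanion2 b 3 = b 3 from rfl, show orthoCompanion2 b 4 = b 4 from rfl, show orthoCompanion2 b 5 = b 5 from rfl, show orthoCompanion2 b 6 = b 6 from rfl, show orthoCompanion2 b 7 = b 7 from rfl, show orthoCompanion2 b 8 = b 8 from rfl, C_add, C_sub, C_mul, C_neg, map_ofNat]
    ring
  · rw [slowness_eq, slowness_eq]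
    simp only [show orthoCompanion3 b 0 = b 0 from rfl, show orthoCompanion3 b 1 = -2 * b 8 - b 1 from rfl, show orthoCompanion3 b 2 = b 2 from rfl, show orthoCompanion3 b 3 = b 3 from rfl, show orthoCompanion3 b 4 = -2 * b 6 - b 4 from rfl, show orthoCompanion3 b 5 = b 5 from rfl, show orthoCompanion3 b 6 = b 6 from rfl, show orthoCompanion3 b 7 = b 7 from rfl, show orthoCompanion3 b 8 = b 8 from rfl, C_add, C_sub, C_mul, C_neg, map_ofNat]
    ring
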